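/- Let (D,F = (f₁,f₂)) be a valid pair satisfying property (E), and let v₀,…,v_ℓ be a path of G = UG(D) of length ℓ ≥ 3 such that every internal vertex vᵢ (1 ≤ i ≤ ℓ−1) has degree 2 in G, and such that both G and G' = UG(D − {v₁,…,v_{ℓ−1}}) are biconnected and contain a cycle. Then there exists an F-dicolouring β of D[{v₁,…,v_{ℓ−1}}] such that the pair reduced from (D,F) by β is not a hard pair. -/

import Mathlib

open scoped Classical

/-- A finite digraph with vertex set a `Finset ℕ` and no loops.
Both arcs `(u,v)` and `(v,u)` may be present (a digon). -/
structure Digraph' where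
  verts : Finset ℕ
  arcs : Finset (ℕ × ℕ)
  mem_fst : ∀ a ∈ arcs, a.1 ∈ verts
  mem_snd : ∀ a ∈ arcs, a.2 ∈ verts
  no_loops : ∀ a ∈ arcs, a.1 ≠ a.2

namespace Digraph'

/-- In-degree of `v`. -/
def inDeg (D : Digraph') (v : ℕ) : ℕ := (D.arcs.filter fun a => a.2 = v).card

/-- Out-degree of `v`. -/
def outDeg (D : Digraph') (v : ℕ) : ℕ := (D.arcs.filter fun a => a.1 = v).card

/-- In-neighbourhood of `v`. -/
def inNbrs (D : Digraph') (v : ℕ) : Finset ℕ := (D.arcs.filter fun a => a.2 = v).image Prod.fst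

/-- Out-neighbourhood of `v`. -/
def outNbrs (D : Digraph') (v : ℕ) : Finset ℕ := (D.arcs.filter fun a => a.1 = v).image Prod.snd

/-- Neighbourhood of `v` in the underlying graph. -/
def ugNbrs (D : Digraph') (v : ℕ) : Finset ℕ := D.inNbrs v ∪ D.outNbrs v

/-- `H` is a subdigraph of `D`. -/
def IsSubdigraph (H D : Digraph') : Prop := H.verts ⊆ D.verts ∧ H.arcs ⊆ D.arcs

/-- The subdigraph of `D` induced by the vertex set `X`. -/
def induce (D : Digraph') (X : Finset ℕ) : Digraph' where
  verts := D.verts ∩ X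
  arcs := D.arcs.filter fun a => a.1 ∈ X ∧ a.2 ∈ X
  mem_fst := fun a ha => by
    simp only [Finset.mem_filter] at ha
    exact Finset.mem_inter.mpr ⟨D.mem_fst a ha.1, ha.2.1⟩
  mem_snd := fun a ha => by
    simp only [Finset.mem_filter] at ha
    exact Finset.mem_inter.mpr ⟨D.mem_snd a ha.1, ha.2.2⟩
  no_loops := fun a ha => by
    simp only [Finset.mem_filter] at ha
    exact D.no_loops a ha.1

/-- `D − X`, the digraph obtained from `D` by deleting the vertices of `X`. -/
def del (D : Digraph') (X : Finset ℕ) : Digraph' := D.induce (D.verts \ X)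

/-- Adjacency in the underlying graph of `D`. -/
def ugAdj (D : Digraph') (u v : ℕ) : Prop :=
  u ∈ D.verts ∧ v ∈ D.verts ∧ ((u, v) ∈ D.arcs ∨ (v, u) ∈ D.arcs)

/-- `D` is connected, i.e. its underlying graph is connected. -/
def Connected (D : Digraph') : Prop :=
  D.verts.Nonempty ∧ ∀ u ∈ D.verts, ∀ v ∈ D.verts, Relation.ReflTransGen D.ugAdj u v

/-- `D` is biconnected: it has at least two vertices, is connected, and stays
connected after the deletion of any vertex. -/
def Biconnected (D : Digraph') : Prop :=
  2 ≤ D.verts.card ∧ D.Connected ∧ ∀ x ∈ D.verts, (D.del {x}).Connected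

/-- Every arc of `D` lies in a digon. -/
def Bidirected (D : Digraph') : Prop := ∀ a ∈ D.arcs, (a.2, a.1) ∈ D.arcs

/-- The underlying graph of `D` is a cycle. -/
def IsCycleUG (D : Digraph') : Prop :=
  D.Connected ∧ ∀ v ∈ D.verts, (D.ugNbrs v).card = 2

/-- `D` is a bidirected odd cycle. -/
def BidirectedOddCycle (D : Digraph') : Prop :=
  D.Bidirected ∧ D.IsCycleUG ∧ Odd D.verts.card

/-- `D` is a bidirected complete graph. -/
def BidirectedComplete (D : Digraph') : Prop :=
  ∀ u ∈ D.verts, ∀ v ∈ D.verts, u ≠ v → (u, v) ∈ D.arcs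

/-- `D` is strictly-`f`-bidegenerate: every nonempty subdigraph `H` of `D` contains a
vertex `v` with `d⁻_H(v) < f⁻(v)` or `d⁺_H(v) < f⁺(v)`. -/
def StrictlyBidegenerate (D : Digraph') (f : ℕ → ℕ × ℕ) : Prop :=
  ∀ H : Digraph', H.IsSubdigraph D → H.verts.Nonempty →
    ∃ v ∈ H.verts, H.inDeg v < (f v).1 ∨ H.outDeg v < (f v).2

/-- `α` is an `F`-dicolouring of `D`: for each colour `i`, the subdigraph induced by the
vertices coloured `i` is strictly-`Fᵢ`-bidegenerate. -/
def IsDicolouring (D : Digraph') (s : ℕ) (F : Fin s → ℕ → ℕ × ℕ) (α : ℕ → Fin s) : Prop :=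
  ∀ i : Fin s, (D.induce (D.verts.filter fun v => α v = i)).StrictlyBidegenerate (F i)

/-- `D` is `F`-dicolourable. -/
def Dicolourable (D : Digraph') (s : ℕ) (F : Fin s → ℕ → ℕ × ℕ) : Prop :=
  ∃ α : ℕ → Fin s, D.IsDicolouring s F α

/-- `(D,F)` is a valid pair: `D` is connected and the colour budget dominates the
in- and out-degrees at every vertex. -/
def ValidPair (D : Digraph') (s : ℕ) (F : Fin s → ℕ → ℕ × ℕ) : Prop :=
  D.Connected ∧ ∀ v ∈ D.verts,
    D.inDeg v ≤ ∑ i, (F i v).1 ∧ D.outDeg v ≤ ∑ i, (F i v).2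

/-- `(D,F)` is tight: both budget inequalities are equalities at every vertex. -/
def Tight (D : Digraph') (s : ℕ) (F : Fin s → ℕ → ℕ × ℕ) : Prop :=
  ∀ v ∈ D.verts, ∑ i, (F i v).1 = D.inDeg v ∧ ∑ i, (F i v).2 = D.outDeg v

/-- Hard pairs, defined inductively: monochromatic, bicycle, complete, and join hard pairs. -/
inductive IsHardPair : (s : ℕ) → Digraph' → (Fin s → ℕ → ℕ × ℕ) → Prop
  | mono {s : ℕ} {D : Digraph'} {F : Fin s → ℕ → ℕ × ℕ} (i : Fin s)
      (hbi : D.Biconnected)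
      (hi : ∀ v ∈ D.verts, F i v = (D.inDeg v, D.outDeg v))
      (hk : ∀ k : Fin s, k ≠ i → ∀ v ∈ D.verts, F k v = (0, 0)) :
      IsHardPair s D F
  | bicycle {s : ℕ} {D : Digraph'} {F : Fin s → ℕ → ℕ × ℕ} (i j : Fin s) (hij : i ≠ j)
      (hD : D.BidirectedOddCycle)
      (hi : ∀ v ∈ D.verts, F i v = (1, 1))
      (hj : ∀ v ∈ D.verts, F j v = (1, 1))
      (hk : ∀ k : Fin s, k ≠ i → k ≠ j → ∀ v ∈ D.verts, F k v = (0, 0)) :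
      IsHardPair s D F
  | complete {s : ℕ} {D : Digraph'} {F : Fin s → ℕ → ℕ × ℕ}
      (hD : D.BidirectedComplete)
      (hconst : ∀ k : Fin s, ∀ u ∈ D.verts, ∀ v ∈ D.verts, F k u = F k v)
      (hsym : ∀ k : Fin s, ∀ v ∈ D.verts, (F k v).1 = (F k v).2)
      (hsum : ∀ v ∈ D.verts, ∑ k, (F k v).2 = D.verts.card - 1) :
      IsHardPair s D F
  | join {s : ℕ} {D : Digraph'} {F : Fin s → ℕ → ℕ × ℕ}
      (D₁ D₂ : Digraph') (F₁ F₂ : Fin s → ℕ → ℕ × ℕ) (x : ℕ)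
      (h₁ : IsHardPair s D₁ F₁) (h₂ : IsHardPair s D₂ F₂)
      (hx : D₁.verts ∩ D₂.verts = {x})
      (hV : D.verts = D₁.verts ∪ D₂.verts)
      (hA : D.arcs = D₁.arcs ∪ D₂.arcs)
      (hF₁ : ∀ k : Fin s, ∀ v ∈ D₁.verts, v ≠ x → F k v = F₁ k v)
      (hF₂ : ∀ k : Fin s, ∀ v ∈ D₂.verts, v ≠ x → F k v = F₂ k v)
      (hFx : ∀ k : Fin s, F k x = ((F₁ k x).1 + (F₂ k x).1, (F₁ k x).2 + (F₂ k x).2)) :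
      IsHardPair s D F

/-- The sequence of functions of the pair reduced from `(D,F)` by a colouring `α` of
`X ⊆ V(D)`: the budget of colour `i` at `u` decreases by the number of in- and out-neighbours
of `u` inside `X` coloured `i` (truncated at `0`). -/
def reduceF (D : Digraph') {s : ℕ} (F : Fin s → ℕ → ℕ × ℕ) (X : Finset ℕ) (α : ℕ → Fin s) :
    Fin s → ℕ → ℕ × ℕ :=
  fun i u =>
    ((F i u).1 - ((D.inNbrs u ∩ X).filter fun w => α w = i).card,
     (F i u).2 - ((D.outNbrs u ∩ X).filter fun w => α w = i).card)

/-- `B` is a block of `D`: a maximal biconnected subdigraph. -/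
def IsBlock (B D : Digraph') : Prop :=
  B.IsSubdigraph D ∧ B.Biconnected ∧
    ∀ B' : Digraph', B'.IsSubdigraph D → B'.Biconnected → B.IsSubdigraph B' → B' = B

/-- `x` is a cut-vertex of `D`: `D − x` is disconnected. -/
def CutVertex (D : Digraph') (x : ℕ) : Prop :=
  x ∈ D.verts ∧ (D.del {x}).verts.Nonempty ∧ ¬ (D.del {x}).Connected

/-- `B` is an end-block of `D` whose unique cut-vertex (of `D`) in `B` is `x`. -/
def IsEndBlockAt (B D : Digraph') (x : ℕ) : Prop :=
  IsBlock B D ∧ x ∈ B.verts ∧ D.CutVertex x ∧ ∀ y ∈ B.verts, D.CutVertex y → y = x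

/-- `B` is a monochromatic hard end-block with cut-vertex `x`, for colour `c`. -/
def MonoHardEndBlock {s : ℕ} (F : Fin s → ℕ → ℕ × ℕ) (B : Digraph') (x : ℕ) (c : Fin s) : Prop :=
  B.inDeg x ≤ (F c x).1 ∧ B.outDeg x ≤ (F c x).2 ∧
    ∀ v ∈ B.verts, v ≠ x →
      F c v = (B.inDeg v, B.outDeg v) ∧ ∀ k : Fin s, k ≠ c → F k v = (0, 0)

/-- `B` is a bicycle hard end-block with cut-vertex `x`. -/
def BicycleHardEndBlock {s : ℕ} (F : Fin s → ℕ → ℕ × ℕ) (B : Digraph') (x : ℕ) : Prop :=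
  B.BidirectedOddCycle ∧
    ∃ i j : Fin s, i ≠ j ∧
      1 ≤ (F i x).1 ∧ 1 ≤ (F i x).2 ∧ 1 ≤ (F j x).1 ∧ 1 ≤ (F j x).2 ∧
      ∀ v ∈ B.verts, v ≠ x →
        F i v = (1, 1) ∧ F j v = (1, 1) ∧ ∀ k : Fin s, k ≠ i → k ≠ j → F k v = (0, 0)

/-- `B` is a complete hard end-block with cut-vertex `x`. -/
def CompleteHardEndBlock {s : ℕ} (F : Fin s → ℕ → ℕ × ℕ) (B : Digraph') (x : ℕ) : Prop :=
  B.BidirectedComplete ∧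
    (∀ k : Fin s, ∀ u ∈ B.verts, u ≠ x → ∀ v ∈ B.verts, v ≠ x → F k u = F k v) ∧
    (∀ k : Fin s, ∀ v ∈ B.verts, v ≠ x → (F k v).1 = (F k v).2) ∧
    (∀ k : Fin s, ∀ u ∈ B.verts, u ≠ x → (F k u).1 ≤ (F k x).1 ∧ (F k u).2 ≤ (F k x).2)

/-- `B` is a hard end-block with cut-vertex `x`. -/
def HardEndBlock {s : ℕ} (F : Fin s → ℕ → ℕ × ℕ) (B : Digraph') (x : ℕ) : Prop :=
  (∃ c : Fin s, MonoHardEndBlock F B x c) ∨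
    BicycleHardEndBlock F B x ∨ CompleteHardEndBlock F B x

/-- `(D',F')` is the contraction of `(D,F)` with respect to the hard end-block `B` with
cut-vertex `x`, where `u` is a vertex of `B` other than `x`. -/
def IsContraction (D : Digraph') {s : ℕ} (F : Fin s → ℕ → ℕ × ℕ) (B : Digraph') (x u : ℕ)
    (D' : Digraph') (F' : Fin s → ℕ → ℕ × ℕ) : Prop :=
  D' = D.del (B.verts \ {x}) ∧
  (∀ k : Fin s, ∀ v ∈ D'.verts, v ≠ x → F' k v = F k v) ∧
  ((∃ c : Fin s, MonoHardEndBlock F B x c ∧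
      F' c x = ((F c x).1 - B.inDeg x, (F c x).2 - B.outDeg x) ∧
      ∀ k : Fin s, k ≠ c → F' k x = F k x) ∨
   ((¬ ∃ c : Fin s, MonoHardEndBlock F B x c) ∧
      ∀ k : Fin s, F' k x = ((F k x).1 - (F k u).1, (F k x).2 - (F k u).2)))

/-- Property (E): all the functions exceed `1` in the relevant coordinate at every vertex
having an in-(resp. out-)neighbour. -/
def PropE (D : Digraph') {s : ℕ} (F : Fin s → ℕ → ℕ × ℕ) : Prop :=
  ∀ x ∈ D.verts, ∀ c : Fin s,
    (0 < D.inDeg x → 1 ≤ (F c x).1) ∧ (0 < D.outDeg x → 1 ≤ (F c x).2)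

/-- `C` is a directed cycle: connected, and every vertex has in- and out-degree one. -/
def IsDirectedCycle (C : Digraph') : Prop :=
  C.Connected ∧ ∀ v ∈ C.verts, C.inDeg v = 1 ∧ C.outDeg v = 1

/-- `D` is acyclic: it contains no directed cycle. -/
def AcyclicD (D : Digraph') : Prop :=
  ¬ ∃ C : Digraph', C.IsSubdigraph D ∧ C.IsDirectedCycle

/-- `α` is a `k`-dicolouring of `D`: every colour class induces an acyclic subdigraph. -/
def IsKDicolouring (D : Digraph') (k : ℕ) (α : ℕ → Fin k) : Prop :=
  ∀ i : Fin k, AcyclicD (D.induce (D.verts.filter fun v => α v = i))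

/-- The dichromatic number of `D`. -/
noncomputable def dichromatic (D : Digraph') : ℕ :=
  sInf {k : ℕ | ∃ α : ℕ → Fin k, D.IsKDicolouring k α}

end Digraph'

open Digraph'

/-!
Colour the interior of the ear alternately, in the two possible ways. The colour classes are
then independent, so (E) makes both colourings `F`-dicolourings. As `D - X` is biconnected, a
hard pair on it is monochromatic or has every function constant. A vertex of `D - X` that is
not adjacent to the ear keeps its budgets, all nonzero by (E), so neither reduced pair is
monochromatic. The end `v₀` of the ear has the single neighbour `v₁` in the ear, so exactly one
of the two colourings lowers the budget of a given colour at `v₀`; hence the two reduced pairs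
cannot both be constant.
-/

theorem Fin.val_ofNat_of_lt {n k : ℕ} [NeZero n] (h : k < n) : (Fin.ofNat n k : ℕ) = k := by
  rw [Fin.val_ofNat, Nat.mod_eq_of_lt h]

theorem Fin.ne_zero_and_ne_last_iff {ℓ : ℕ} (i : Fin (ℓ + 1)) :
    i ≠ 0 ∧ i ≠ Fin.last ℓ ↔ 0 < (i : ℕ) ∧ (i : ℕ) < ℓ := by
  rw [Fin.ne_iff_vne, Fin.ne_iff_vne, Fin.val_zero, Fin.val_last]
  omega

namespace Digraph'

variable {s : ℕ} {D D₁ D₂ : Digraph'} {F F₁ F₂ : Fin s → ℕ → ℕ × ℕ} {X : Finset ℕ}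

theorem ext_of_verts_arcs (hV : D₁.verts = D₂.verts) (hA : D₁.arcs = D₂.arcs) : D₁ = D₂ := by
  cases D₁; cases D₂; simp_all

theorem mem_inNbrs {v w : ℕ} : w ∈ D.inNbrs v ↔ (w, v) ∈ D.arcs := by
  simp [inNbrs]

theorem mem_outNbrs {v w : ℕ} : w ∈ D.outNbrs v ↔ (v, w) ∈ D.arcs := by
  simp [outNbrs]

theorem mem_ugNbrs {v w : ℕ} : w ∈ D.ugNbrs v ↔ (w, v) ∈ D.arcs ∨ (v, w) ∈ D.arcs := by
  simp [ugNbrs, mem_inNbrs, mem_outNbrs]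

theorem mem_ugNbrs_comm {v w : ℕ} : w ∈ D.ugNbrs v ↔ v ∈ D.ugNbrs w := by
  simp only [mem_ugNbrs, or_comm]

theorem ugAdj_iff_mem_ugNbrs {v w : ℕ} : D.ugAdj v w ↔ w ∈ D.ugNbrs v := by
  rw [mem_ugNbrs, ugAdj]
  constructor
  · rintro ⟨-, -, h | h⟩ <;> simp [h]
  · rintro (h | h)
    · exact ⟨D.mem_snd _ h, D.mem_fst _ h, Or.inr h⟩
    · exact ⟨D.mem_fst _ h, D.mem_snd _ h, Or.inl h⟩

theorem verts_del : (D.del X).verts = D.verts \ X :=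
  Finset.inter_eq_right.mpr Finset.sdiff_subset

theorem mem_arcs_del {a : ℕ × ℕ} : a ∈ (D.del X).arcs ↔ a ∈ D.arcs ∧ a.1 ∉ X ∧ a.2 ∉ X := by
  simp only [del, induce, Finset.mem_filter, Finset.mem_sdiff]
  constructor
  · rintro ⟨ha, ⟨-, h₁⟩, -, h₂⟩
    exact ⟨ha, h₁, h₂⟩
  · rintro ⟨ha, h₁, h₂⟩
    exact ⟨ha, ⟨D.mem_fst a ha, h₁⟩, D.mem_snd a ha, h₂⟩

theorem ugAdj_del {u v : ℕ} : (D.del X).ugAdj u v ↔ D.ugAdj u v ∧ u ∉ X ∧ v ∉ X := by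
  simp only [ugAdj, verts_del, Finset.mem_sdiff, mem_arcs_del]
  tauto

theorem arcs_eq_empty_of_verts_eq_singleton {x : ℕ} (h : D.verts = {x}) : D.arcs = ∅ :=
  Finset.eq_empty_of_forall_notMem fun a ha => by
    have h₁ := D.mem_fst a ha
    have h₂ := D.mem_snd a ha
    rw [h, Finset.mem_singleton] at h₁ h₂
    exact D.no_loops a ha (h₁.trans h₂.symm)

theorem inDeg_pos_of_mem_arcs {v w : ℕ} (h : (w, v) ∈ D.arcs) : 0 < D.inDeg v :=
  Finset.card_pos.mpr ⟨_, Finset.mem_filter.mpr ⟨h, rfl⟩⟩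

theorem outDeg_pos_of_mem_arcs {v w : ℕ} (h : (v, w) ∈ D.arcs) : 0 < D.outDeg v :=
  Finset.card_pos.mpr ⟨_, Finset.mem_filter.mpr ⟨h, rfl⟩⟩

theorem Connected.exists_ugAdj (hD : D.Connected) (hcard : 2 ≤ D.verts.card) {v : ℕ}
    (hv : v ∈ D.verts) : ∃ w, D.ugAdj v w := by
  obtain ⟨w, hw, hwv⟩ := Finset.exists_mem_ne (by omega : 1 < D.verts.card) v
  rcases (hD.2 v hv w hw).cases_head with h | ⟨c, hc, -⟩
  · exact absurd h.symm hwv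
  · exact ⟨c, hc⟩

theorem IsCycleUG.three_le_card (hD : D.IsCycleUG) : 3 ≤ D.verts.card := by
  obtain ⟨v, hv⟩ := hD.1.1
  have hsub : insert v (D.ugNbrs v) ⊆ D.verts := Finset.insert_subset hv
    fun w hw => (ugAdj_iff_mem_ugNbrs.mpr hw).2.1
  have hv' : v ∉ D.ugNbrs v := fun h => by
    rcases mem_ugNbrs.mp h with h | h <;> exact D.no_loops _ h rfl
  have := Finset.card_le_card hsub
  rwa [Finset.card_insert_of_notMem hv', hD.2 v hv] at this

theorem IsHardPair.apply_eq_zero_of_verts_eq_singleton (h : IsHardPair s D F) {x : ℕ}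
    (hx : D.verts = {x}) (k : Fin s) : F k x = (0, 0) := by
  induction h generalizing x with
  | mono _ hbi =>
    have := hbi.1
    simp [hx] at this
  | bicycle _ _ _ hD =>
    have := hD.2.1.three_le_card
    simp [hx] at this
  | @complete D F _ _ hsym hsum =>
    have hxD : x ∈ D.verts := by simp [hx]
    have hsum := hsum x hxD
    rw [hx, Finset.card_singleton, Nat.sub_self, Finset.sum_eq_zero_iff] at hsum
    have h₂ := hsum k (Finset.mem_univ k)
    exact Prod.ext ((hsym k x hxD).trans h₂) h₂
  | join D₁ D₂ F₁ F₂ y _ _ hy hV _ _ _ hFy ih₁ ih₂ =>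
    have hy' : y ∈ D₁.verts ∧ y ∈ D₂.verts := Finset.mem_inter.mp (hy ▸ Finset.mem_singleton_self y)
    have hsub : D₁.verts ∪ D₂.verts ⊆ {x} := hV ▸ hx.subset
    have hyx : y = x := Finset.mem_singleton.mp (hsub (Finset.mem_union_left _ hy'.1))
    subst hyx
    have h₁ := (Finset.subset_singleton_iff.mp (Finset.union_subset_left hsub)).resolve_left
      (Finset.ne_empty_of_mem hy'.1)
    have h₂ := (Finset.subset_singleton_iff.mp (Finset.union_subset_right hsub)).resolve_left
      (Finset.ne_empty_of_mem hy'.2)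
    rw [hFy, ih₁ h₁, ih₂ h₂]
    rfl

/-- The shape of a hard pair without cut-vertex: bicycle and complete pairs fall under the
second alternative. -/
def MonoOrConstant (s : ℕ) (D : Digraph') (F : Fin s → ℕ → ℕ × ℕ) : Prop :=
  (∃ i, ∀ k ≠ i, ∀ v ∈ D.verts, F k v = (0, 0)) ∨
    ∀ k, ∀ u ∈ D.verts, ∀ v ∈ D.verts, F k u = F k v

theorem MonoOrConstant.congr (h : MonoOrConstant s D F₁)
    (hF : ∀ k, ∀ v ∈ D.verts, F k v = F₁ k v) : MonoOrConstant s D F := by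
  rcases h with ⟨i, hi⟩ | hc
  · exact .inl ⟨i, fun k hk v hv => (hF k v hv).trans (hi k hk v hv)⟩
  · exact .inr fun k u hu v hv => by rw [hF k u hu, hF k v hv, hc k u hu v hv]

theorem eq_left_of_join_of_verts_eq_singleton (h₂ : IsHardPair s D₂ F₂) {x : ℕ}
    (hx : D₁.verts ∩ D₂.verts = {x}) (hV : D.verts = D₁.verts ∪ D₂.verts)
    (hA : D.arcs = D₁.arcs ∪ D₂.arcs) (hF₁ : ∀ k, ∀ v ∈ D₁.verts, v ≠ x → F k v = F₁ k v)
    (hFx : ∀ k, F k x = F₁ k x + F₂ k x) (h₂x : D₂.verts = {x}) :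
    D = D₁ ∧ ∀ k, ∀ v ∈ D.verts, F k v = F₁ k v := by
  have hx₁ : x ∈ D₁.verts := (Finset.mem_inter.mp (hx ▸ Finset.mem_singleton_self x)).1
  have hD : D = D₁ := ext_of_verts_arcs
    (by rw [hV, h₂x, Finset.union_eq_left.mpr (Finset.singleton_subset_iff.mpr hx₁)])
    (by rw [hA, arcs_eq_empty_of_verts_eq_singleton h₂x, Finset.union_empty])
  refine ⟨hD, fun k v hv => ?_⟩
  rcases eq_or_ne v x with rfl | hvx
  · rw [hFx, h₂.apply_eq_zero_of_verts_eq_singleton h₂x]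
    rfl
  · exact hF₁ k v (hD ▸ hv) hvx

theorem not_connected_del_of_join {x u w : ℕ} (hx : D₁.verts ∩ D₂.verts = {x})
    (hV : D.verts = D₁.verts ∪ D₂.verts) (hA : D.arcs = D₁.arcs ∪ D₂.arcs)
    (hu : u ∈ D₁.verts) (hux : u ≠ x) (hw : w ∈ D₂.verts) (hwx : w ≠ x) :
    ¬ (D.del {x}).Connected := by
  intro hconn
  have hmem : ∀ {v : ℕ}, v ∈ D₁.verts → v ∈ D₂.verts → v = x := fun h₁ h₂ =>
    Finset.mem_singleton.mp (hx ▸ Finset.mem_inter.mpr ⟨h₁, h₂⟩)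
  have hclosed : ∀ b c, b ∈ D₁.verts ∧ b ≠ x → (D.del {x}).ugAdj b c →
      c ∈ D₁.verts ∧ c ≠ x := by
    rintro b c ⟨hb, hbx⟩ hbc
    obtain ⟨⟨-, -, hbc⟩, -, hcx⟩ := ugAdj_del.mp hbc
    refine ⟨?_, by simpa using hcx⟩
    rw [hA] at hbc
    rcases hbc with h | h <;> rcases Finset.mem_union.mp h with h | h
    · exact D₁.mem_snd _ h
    · exact absurd (hmem hb (D₂.mem_fst _ h)) hbx
    · exact D₁.mem_fst _ h
    · exact absurd (hmem hb (D₂.mem_snd _ h)) hbx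
  have hreach : ∀ {c}, Relation.ReflTransGen (D.del {x}).ugAdj u c → c ∈ D₁.verts ∧ c ≠ x := by
    intro c h
    induction h with
    | refl => exact ⟨hu, hux⟩
    | tail _ hbc ih => exact hclosed _ _ ih hbc
  have hw₁ := (hreach (hconn.2 u (by simp [verts_del, hV, hu, hux]) w
    (by simp [verts_del, hV, hw, hwx]))).1
  exact hwx (hmem hw₁ hw)

theorem IsHardPair.monoOrConstant (h : IsHardPair s D F)
    (hD : ∀ x ∈ D.verts, (D.del {x}).Connected) : MonoOrConstant s D F := by
  induction h with
  | mono i _ _ hk => exact .inl ⟨i, hk⟩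
  | bicycle i j _ _ hi hj hk =>
    refine .inr fun k u hu v hv => ?_
    by_cases hki : k = i
    · rw [hki, hi u hu, hi v hv]
    by_cases hkj : k = j
    · rw [hkj, hj u hu, hj v hv]
    rw [hk k hki hkj u hu, hk k hki hkj v hv]
  | complete _ hconst => exact .inr hconst
  | @join D F D₁ D₂ F₁ F₂ x h₁ h₂ hx hV hA hF₁ hF₂ hFx ih₁ ih₂ =>
    by_cases h₂x : D₂.verts = {x}
    · obtain ⟨rfl, hF⟩ := eq_left_of_join_of_verts_eq_singleton h₂ hx hV hA hF₁ hFx h₂x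
      exact (ih₁ hD).congr hF
    by_cases h₁x : D₁.verts = {x}
    · obtain ⟨rfl, hF⟩ := eq_left_of_join_of_verts_eq_singleton h₁
        ((Finset.inter_comm _ _).trans hx) (hV.trans (Finset.union_comm _ _))
        (hA.trans (Finset.union_comm _ _)) hF₂ (fun k => (hFx k).trans (add_comm _ _)) h₁x
      exact (ih₂ hD).congr hF
    have hx' : x ∈ D₁.verts ∩ D₂.verts := hx ▸ Finset.mem_singleton_self x
    obtain ⟨u, hu, hux⟩ : ∃ u ∈ D₁.verts, u ≠ x := by
      by_contra! h
      exact h₁x (Finset.eq_singleton_iff_unique_mem.mpr ⟨(Finset.mem_inter.mp hx').1, h⟩)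
    obtain ⟨w, hw, hwx⟩ : ∃ w ∈ D₂.verts, w ≠ x := by
      by_contra! h
      exact h₂x (Finset.eq_singleton_iff_unique_mem.mpr ⟨(Finset.mem_inter.mp hx').2, h⟩)
    exact absurd (hD x (hV ▸ Finset.mem_union_left _ (Finset.mem_inter.mp hx').1))
      (not_connected_del_of_join hx hV hA hu hux hw hwx)

theorem PropE.apply_ne_zero_of_ugAdj (hE : D.PropE F) {v w : ℕ} (h : D.ugAdj v w) (k : Fin s) :
    F k v ≠ (0, 0) := by
  intro h0
  obtain ⟨hv, -, h | h⟩ := h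
  · have := (hE v hv k).2 (outDeg_pos_of_mem_arcs h)
    simp [h0] at this
  · have := (hE v hv k).1 (inDeg_pos_of_mem_arcs h)
    simp [h0] at this

theorem strictlyBidegenerate_of_arcs_eq_empty {f : ℕ → ℕ × ℕ} (hA : D.arcs = ∅)
    (hf : ∀ v ∈ D.verts, f v ≠ (0, 0)) : D.StrictlyBidegenerate f := by
  rintro H ⟨hV, hHA⟩ ⟨v, hv⟩
  have hHA : H.arcs = ∅ := Finset.subset_empty.mp (hA ▸ hHA)
  refine ⟨v, hv, ?_⟩
  simp only [inDeg, outDeg, hHA, Finset.filter_empty, Finset.card_empty, Nat.pos_iff_ne_zero]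
  by_contra! h
  exact hf v (hV hv) (Prod.ext h.1 h.2)

theorem isDicolouring_of_forall_ne {α : ℕ → Fin s} (hα : ∀ a ∈ D.arcs, α a.1 ≠ α a.2)
    (hF : ∀ i, ∀ v ∈ D.verts, F i v ≠ (0, 0)) : D.IsDicolouring s F α := by
  intro i
  refine strictlyBidegenerate_of_arcs_eq_empty ?_ fun v hv => hF i v (Finset.mem_inter.mp hv).1
  refine Finset.eq_empty_of_forall_notMem fun a ha => ?_
  simp only [induce, Finset.mem_filter] at ha
  exact hα a ha.1 (ha.2.1.2.trans ha.2.2.2.symm)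

theorem reduceF_apply_eq_of_forall_ne {α : ℕ → Fin s} {k : Fin s} {v : ℕ}
    (h : ∀ w ∈ X, w ∈ D.ugNbrs v → α w ≠ k) : D.reduceF F X α k v = F k v := by
  have hin : ((D.inNbrs v ∩ X).filter fun w => α w = k) = ∅ :=
    Finset.filter_eq_empty_iff.mpr fun w hw =>
      h w (Finset.mem_inter.mp hw).2 (Finset.mem_union_left _ (Finset.mem_inter.mp hw).1)
  have hout : ((D.outNbrs v ∩ X).filter fun w => α w = k) = ∅ :=
    Finset.filter_eq_empty_iff.mpr fun w hw =>
      h w (Finset.mem_inter.mp hw).2 (Finset.mem_union_right _ (Finset.mem_inter.mp hw).1)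
  simp [reduceF, hin, hout]

theorem reduceF_apply_ne (hE : D.PropE F) {α : ℕ → Fin s} {v w : ℕ} (hw : w ∈ X)
    (hwv : w ∈ D.ugNbrs v) : D.reduceF F X α (α w) v ≠ F (α w) v := by
  intro h
  rcases mem_ugNbrs.mp hwv with harc | harc
  · have hpos := (hE v (D.mem_snd _ harc) (α w)).1 (inDeg_pos_of_mem_arcs harc)
    have hcard : 0 < ((D.inNbrs v ∩ X).filter fun u => α u = α w).card :=
      Finset.card_pos.mpr ⟨w, by simp [mem_inNbrs, harc, hw]⟩
    have := congrArg Prod.fst h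
    simp only [reduceF] at this
    omega
  · have hpos := (hE v (D.mem_fst _ harc) (α w)).2 (outDeg_pos_of_mem_arcs harc)
    have hcard : 0 < ((D.outNbrs v ∩ X).filter fun u => α u = α w).card :=
      Finset.card_pos.mpr ⟨w, by simp [mem_outNbrs, harc, hw]⟩
    have := congrArg Prod.snd h
    simp only [reduceF] at this
    omega

theorem not_isHardPair_reduceF_or [Nontrivial (Fin s)] (hE : D.PropE F)
    (hD : ∀ x ∈ (D.del X).verts, ((D.del X).del {x}).Connected)
    {u v w : ℕ} (hu : u ∈ (D.del X).verts) (huX : ∀ w ∈ X, w ∉ D.ugNbrs u)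
    (hFu : ∀ k, F k u ≠ (0, 0)) (hv : v ∈ (D.del X).verts) (hw : w ∈ X) (hwv : w ∈ D.ugNbrs v)
    (hvX : ∀ w' ∈ X, w' ∈ D.ugNbrs v → w' = w) {α β : ℕ → Fin s} (hαβ : α w ≠ β w) :
    ¬ IsHardPair s (D.del X) (D.reduceF F X α) ∨ ¬ IsHardPair s (D.del X) (D.reduceF F X β) := by
  have hfixu : ∀ γ k, D.reduceF F X γ k u = F k u := fun _ _ =>
    reduceF_apply_eq_of_forall_ne fun w' hw' h => absurd h (huX w' hw')
  have hconst : ∀ γ, IsHardPair s (D.del X) (D.reduceF F X γ) →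
      ∀ k, D.reduceF F X γ k v = F k u := by
    intro γ hγ k
    rcases hγ.monoOrConstant hD with ⟨i, hi⟩ | hc
    · obtain ⟨k', hk'⟩ := exists_ne i
      exact absurd ((hfixu γ k').symm.trans (hi k' hk' u hu)) (hFu k')
    · rw [hc k v hv u hu, hfixu]
  by_contra! h
  have hβv : D.reduceF F X β (α w) v = F (α w) v :=
    reduceF_apply_eq_of_forall_ne fun w' hw' h' => hvX w' hw' h' ▸ hαβ.symm
  exact reduceF_apply_ne hE hw hwv ((hconst α h.1 _).trans ((hconst β h.2 _).symm.trans hβv))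

structure IsEar (D : Digraph') (ℓ : ℕ) (q : ℕ → ℕ) : Prop where
  injOn : Set.InjOn q (Set.Iic ℓ)
  ugAdj : ∀ k < ℓ, D.ugAdj (q k) (q (k + 1))
  card_ugNbrs : ∀ k, 0 < k → k < ℓ → (D.ugNbrs (q k)).card = 2

namespace IsEar

variable {ℓ : ℕ} {q : ℕ → ℕ}

theorem ugNbrs_eq (hq : D.IsEar ℓ q) {k : ℕ} (hk : 0 < k) (hkℓ : k < ℓ) :
    D.ugNbrs (q k) = {q (k - 1), q (k + 1)} := by
  have hprev : q (k - 1) ∈ D.ugNbrs (q k) := by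
    have := hq.ugAdj (k - 1) (by omega)
    rwa [Nat.sub_add_cancel hk, ugAdj_iff_mem_ugNbrs, mem_ugNbrs_comm] at this
  have hnext : q (k + 1) ∈ D.ugNbrs (q k) := ugAdj_iff_mem_ugNbrs.mp (hq.ugAdj k hkℓ)
  have hne : q (k - 1) ≠ q (k + 1) := fun h => by
    have := hq.injOn (Set.mem_Iic.mpr (by omega)) (Set.mem_Iic.mpr (by omega)) h
    omega
  refine (Finset.eq_of_subset_of_card_le (Finset.insert_subset hprev
    (Finset.singleton_subset_iff.mpr hnext)) ?_).symm
  rw [hq.card_ugNbrs k hk hkℓ, Finset.card_pair hne]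

theorem ne_of_mem_arcs_induce (hq : D.IsEar ℓ q) (hX : X = (Finset.Ioo 0 ℓ).image q)
    {α : ℕ → Fin s} (hα : ∀ k < ℓ, α (q k) ≠ α (q (k + 1))) :
    ∀ a ∈ (D.induce X).arcs, α a.1 ≠ α a.2 := by
  subst hX
  rintro ⟨_, y⟩ ha
  simp only [induce, Finset.mem_filter, Finset.mem_image, Finset.mem_Ioo] at ha
  obtain ⟨ha, ⟨k, ⟨hk, hkℓ⟩, rfl⟩, -⟩ := ha
  have hy : y ∈ D.ugNbrs (q k) := mem_ugNbrs.mpr (Or.inr ha)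
  rw [hq.ugNbrs_eq hk hkℓ, Finset.mem_insert, Finset.mem_singleton] at hy
  rcases hy with rfl | rfl
  · have := hα (k - 1) (by omega)
    rw [Nat.sub_add_cancel hk] at this
    exact this.symm
  · exact hα k hkℓ

theorem eq_one_of_mem_ugNbrs_zero (hq : D.IsEar ℓ q) (hX : X = (Finset.Ioo 0 ℓ).image q) :
    ∀ w ∈ X, w ∈ D.ugNbrs (q 0) → w = q 1 := by
  subst hX
  simp only [Finset.mem_image, Finset.mem_Ioo]
  rintro _ ⟨k, ⟨hk, hkℓ⟩, rfl⟩ h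
  rw [mem_ugNbrs_comm, hq.ugNbrs_eq hk hkℓ, Finset.mem_insert, Finset.mem_singleton] at h
  rcases h with h | h <;>
    have := hq.injOn (Set.mem_Iic.mpr (Nat.zero_le ℓ)) (Set.mem_Iic.mpr (by omega)) h
  · rw [show k = 1 by omega]
  · omega

theorem notMem_ugNbrs (hq : D.IsEar ℓ q) (hX : X = (Finset.Ioo 0 ℓ).image q) {u : ℕ}
    (huX : u ∉ X) (hu₀ : u ≠ q 0) (huℓ : u ≠ q ℓ) : ∀ w ∈ X, w ∉ D.ugNbrs u := by
  subst hX
  simp only [Finset.mem_image, Finset.mem_Ioo, not_exists, not_and] at huX ⊢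
  rintro _ ⟨k, hk, rfl⟩ h
  rw [mem_ugNbrs_comm, hq.ugNbrs_eq hk.1 hk.2, Finset.mem_insert, Finset.mem_singleton] at h
  rcases h with rfl | rfl
  · rcases Nat.eq_zero_or_pos (k - 1) with h0 | h0
    · exact hu₀ (by rw [h0])
    · exact huX (k - 1) ⟨h0, by omega⟩ rfl
  · rcases eq_or_lt_of_le (show k + 1 ≤ ℓ by omega) with hℓ | hℓ
    · exact huℓ (by rw [hℓ])
    · exact huX (k + 1) ⟨by omega, hℓ⟩ rfl

theorem exists_isDicolouring_not_isHardPair {F : Fin 2 → ℕ → ℕ × ℕ} (hq : D.IsEar ℓ q)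
    (hℓ : 2 ≤ ℓ) (hX : X = (Finset.Ioo 0 ℓ).image q) (hE : D.PropE F)
    (hbi : (D.del X).Biconnected) (hcyc : ∃ C : Digraph', C.IsSubdigraph (D.del X) ∧ C.IsCycleUG) :
    ∃ β : ℕ → Fin 2, (D.induce X).IsDicolouring 2 F β ∧
      ¬ IsHardPair 2 (D.del X) (D.reduceF F X β) := by
  have hIic : ∀ j, j ≤ ℓ → j ∈ Set.Iic ℓ := fun _ => Set.mem_Iic.mpr
  have hq₀ : q 0 ∈ (D.del X).verts := by
    refine verts_del ▸ Finset.mem_sdiff.mpr ⟨(hq.ugAdj 0 (by omega)).1, ?_⟩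
    simp only [hX, Finset.mem_image, Finset.mem_Ioo, not_exists, not_and]
    exact fun k hk h => by have := hq.injOn (hIic k (by omega)) (hIic 0 (by omega)) h; omega
  have hq₁ : q 1 ∈ X := hX ▸ Finset.mem_image_of_mem q (Finset.mem_Ioo.mpr ⟨by omega, by omega⟩)
  obtain ⟨u, hu, hu₀, huℓ⟩ : ∃ u ∈ (D.del X).verts, u ≠ q 0 ∧ u ≠ q ℓ := by
    obtain ⟨C, hCD, hC⟩ := hcyc
    have h3 := hC.three_le_card.trans (Finset.card_le_card hCD.1)
    have := (Finset.le_card_sdiff {q 0, q ℓ} (D.del X).verts).trans' (Nat.sub_le_sub_left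
      (Finset.card_le_two (a := q 0) (b := q ℓ)) _)
    obtain ⟨u, hu⟩ := Finset.card_pos.mp (by omega : 0 < ((D.del X).verts \ {q 0, q ℓ}).card)
    simp only [Finset.mem_sdiff, Finset.mem_insert, Finset.mem_singleton, not_or] at hu
    exact ⟨u, hu.1, hu.2⟩
  obtain ⟨y, huy⟩ := hbi.2.1.exists_ugAdj hbi.1 hu
  have huX : u ∉ X := (Finset.mem_sdiff.mp (verts_del ▸ hu)).2
  set α : ℕ → Fin 2 := fun n => if Even (Function.invFunOn q (Set.Iic ℓ) n) then 0 else 1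
  have hα : ∀ k < ℓ, α (q k) ≠ α (q (k + 1)) := fun k hk => by
    simp only [α, hq.injOn.leftInvOn_invFunOn (hIic k hk.le),
      hq.injOn.leftInvOn_invFunOn (hIic _ hk), Nat.even_add_one]
    split_ifs <;> decide
  have hcol : ∀ γ : ℕ → Fin 2, (∀ k < ℓ, γ (q k) ≠ γ (q (k + 1))) →
      (D.induce X).IsDicolouring 2 F γ := fun γ hγ =>
    isDicolouring_of_forall_ne (hq.ne_of_mem_arcs_induce hX hγ) fun i v hv => by
      obtain ⟨k, hk, rfl⟩ := Finset.mem_image.mp (hX ▸ (Finset.mem_inter.mp hv).2)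
      exact hE.apply_ne_zero_of_ugAdj (hq.ugAdj k (Finset.mem_Ioo.mp hk).2) i
  rcases not_isHardPair_reduceF_or hE hbi.2.2 hu (hq.notMem_ugNbrs hX huX hu₀ huℓ)
      (hE.apply_ne_zero_of_ugAdj (ugAdj_del.mp huy).1) hq₀ hq₁
      (ugAdj_iff_mem_ugNbrs.mp (hq.ugAdj 0 (by omega))) (hq.eq_one_of_mem_ugNbrs_zero hX)
      (α := α) (β := fun n => α n + 1) (by simp) with h | h
  · exact ⟨α, hcol α hα, h⟩
  · exact ⟨_, hcol _ fun k hk h => hα k hk (add_right_cancel h), h⟩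

end IsEar

theorem isEar_comp_ofNat {ℓ : ℕ} {p : Fin (ℓ + 1) → ℕ} (hinj : Function.Injective p)
    (hpath : ∀ i : Fin ℓ, D.ugAdj (p i.castSucc) (p i.succ))
    (hdeg : ∀ i : Fin (ℓ + 1), i ≠ 0 → i ≠ Fin.last ℓ → (D.ugNbrs (p i)).card = 2) :
    D.IsEar ℓ (p ∘ Fin.ofNat (ℓ + 1)) := by
  have hp : ∀ i : Fin (ℓ + 1), (p ∘ Fin.ofNat (ℓ + 1)) i = p i := fun i => by simp
  refine ⟨fun j hj k hk h => ?_, fun k hk => ?_, fun k hk₀ hkℓ => ?_⟩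
  · rw [← Fin.val_ofNat_of_lt (Nat.lt_succ_of_le hj), ← Fin.val_ofNat_of_lt (Nat.lt_succ_of_le hk),
      hinj h]
  · have := hpath ⟨k, hk⟩
    rwa [← hp, ← hp, Fin.val_castSucc, Fin.val_succ] at this
  · have hk := (Fin.ne_zero_and_ne_last_iff (Fin.ofNat (ℓ + 1) k)).mpr
      (by rw [Fin.val_ofNat_of_lt (by omega)]; exact ⟨hk₀, hkℓ⟩)
    exact hdeg _ hk.1 hk.2

theorem image_comp_ofNat_Ioo {ℓ : ℕ} (p : Fin (ℓ + 1) → ℕ) :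
    (Finset.Ioo 0 ℓ).image (p ∘ Fin.ofNat (ℓ + 1)) =
      (Finset.univ.filter fun i : Fin (ℓ + 1) => i ≠ 0 ∧ i ≠ Fin.last ℓ).image p := by
  ext n
  simp only [Finset.mem_image, Finset.mem_filter, Finset.mem_univ, true_and,
    Fin.ne_zero_and_ne_last_iff, Finset.mem_Ioo, Function.comp_apply]
  constructor
  · rintro ⟨k, hk, rfl⟩
    exact ⟨Fin.ofNat (ℓ + 1) k, by rwa [Fin.val_ofNat_of_lt (by omega)], rfl⟩
  · rintro ⟨i, hi, rfl⟩
    exact ⟨i, hi, by simp⟩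

end Digraph'

theorem colour_long_ear_general
    (D : Digraph') (F : Fin 2 → ℕ → ℕ × ℕ)
    (hE : D.PropE F)
    (ℓ : ℕ) (hℓ : 3 ≤ ℓ) (p : Fin (ℓ + 1) → ℕ)
    (hinj : Function.Injective p)
    (hpath : ∀ i : Fin ℓ, D.ugAdj (p i.castSucc) (p i.succ))
    (hdeg2 : ∀ i : Fin (ℓ + 1), i ≠ 0 → i ≠ Fin.last ℓ → (D.ugNbrs (p i)).card = 2)
    (X : Finset ℕ)
    (hX : X = (Finset.univ.filter fun i : Fin (ℓ + 1) => i ≠ 0 ∧ i ≠ Fin.last ℓ).image p)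
    (hbi' : (D.del X).Biconnected)
    (hcyc' : ∃ C : Digraph', C.IsSubdigraph (D.del X) ∧ C.IsCycleUG) :
    ∃ β : ℕ → Fin 2, (D.induce X).IsDicolouring 2 F β ∧
      ¬ IsHardPair 2 (D.del X) (D.reduceF F X β) :=
  (isEar_comp_ofNat hinj hpath hdeg2).exists_isDicolouring_not_isHardPair (by omega)
    (hX.trans (image_comp_ofNat_Ioo p).symm) hE hbi' hcyc'

/-- **Lemma (colouring a long ear).** Let `(D,F=(f₁,f₂))` be a valid pair satisfying (E), and
let `v₀,…,v_ℓ` (`ℓ ≥ 3`) be a path of `UG(D)` whose internal vertices have degree 2 in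
`UG(D)`, such that both `UG(D)` and `UG(D − {v₁,…,v_{ℓ−1}})` are biconnected and contain a
cycle. Then there is an `F`-dicolouring `β` of `D[{v₁,…,v_{ℓ−1}}]` such that the pair reduced
from `(D,F)` by `β` is not a hard pair. -/
theorem colour_long_ear
    (D : Digraph') (F : Fin 2 → ℕ → ℕ × ℕ)
    (hvalid : D.ValidPair 2 F) (hE : D.PropE F)
    (ℓ : ℕ) (hℓ : 3 ≤ ℓ) (p : Fin (ℓ + 1) → ℕ)
    (hinj : Function.Injective p) (hmem : ∀ i, p i ∈ D.verts)
    (hpath : ∀ i : Fin ℓ, D.ugAdj (p i.castSucc) (p i.succ))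
    (hdeg2 : ∀ i : Fin (ℓ + 1), i ≠ 0 → i ≠ Fin.last ℓ → (D.ugNbrs (p i)).card = 2)
    (X : Finset ℕ)
    (hX : X = (Finset.univ.filter fun i : Fin (ℓ + 1) => i ≠ 0 ∧ i ≠ Fin.last ℓ).image p)
    (hbi : D.Biconnected) (hbi' : (D.del X).Biconnected)
    (hcyc : ∃ C : Digraph', C.IsSubdigraph D ∧ C.IsCycleUG)
    (hcyc' : ∃ C : Digraph', C.IsSubdigraph (D.del X) ∧ C.IsCycleUG) :
    ∃ β : ℕ → Fin 2, (D.induce X).IsDicolouring 2 F β ∧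
      ¬ IsHardPair 2 (D.del X) (D.reduceF F X β) :=
  colour_long_ear_general D F hE ℓ hℓ p hinj hpath hdeg2 X hX hbi' hcyc'
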